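/- arXiv:0906.1676 — 4 statements merged into one kernel-verified Lean document; each statement's English description precedes it below -/
import Mathlib

section
/- If q + τ(ξ-1) < 0 (with τ ∈ (0,1], ξ ∈ (0,1], q ∈ (0,1], and discriminant (τ(ξ-1)-q)² - 4q(1-ξτ) ≥ 0), then u₂ = τξ - i₂ < 0, i.e., the larger-root equilibrium is biologically infeasible. -/
/-- If q + τ(ξ-1) < 0 then u₂ = τξ - i₂ < 0, i.e. the larger-root equilibrium
is biologically infeasible. -/
theorem u2_neg (τ ξ q : ℝ)
    (hτ : 0 < τ ∧ τ ≤ 1) (hξ : 0 < ξ ∧ ξ ≤ 1) (hq : 0 < q ∧ q ≤ 1)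
    (hdisc : (τ * (ξ - 1) - q) ^ 2 - 4 * q * (1 - ξ * τ) ≥ 0)
    (hcond : q + τ * (ξ - 1) < 0) :
    τ * ξ - τ * ξ * (q - τ * (ξ - 1) +
        Real.sqrt ((τ * (ξ - 1) - q) ^ 2 - 4 * q * (1 - ξ * τ))) / (2 * q) < 0 := by
  have hs : Real.sqrt ((τ * (ξ - 1) - q) ^ 2 - 4 * q * (1 - ξ * τ)) ≥ 0 :=
    Real.sqrt_nonneg _
  rw [sub_neg, lt_div_iff₀ (by linarith [hq.1] : (0:ℝ) < 2 * q)]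
  nlinarith [mul_pos hτ.1 hξ.1, hq.1]
end

section
/- For the mutually incompatible two-strain model, the quantity q_{B,A}·i_A - q_{A,B}·i_B satisfies d/dt(q_{B,A}i_A - q_{A,B}i_B) = (τ - ηp)(q_{B,A}i_A - q_{A,B}i_B); hence the plane R* = {q_{B,A}i_A = q_{A,B}i_B} and the wedges on either side of it are forward invariant. -/
open Set Real

/-- If `w' = a·w` with `a` continuous and `w t₀ = 0`, then `w t = 0` for all `t ≥ t₀`. -/
private lemma zero_forward (a w : ℝ → ℝ) (ha : Continuous a)
    (hw : ∀ t, HasDerivAt w (a t * w t) t) (hwc : Continuous w)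
    {t₀ t : ℝ} (ht : t₀ ≤ t) (h0 : w t₀ = 0) : w t = 0 := by
  obtain ⟨C, hC⟩ := (isCompact_Icc (a := t₀) (b := t)).exists_bound_of_continuousOn
    ha.continuousOn
  have hC0 : 0 ≤ C := le_trans (norm_nonneg _) (hC t₀ ⟨le_refl _, ht⟩)
  set K : NNReal := ⟨C, hC0⟩
  set v : ℝ → ℝ → ℝ := fun s x => a (Set.projIcc t₀ t ht s) * x with hvdef
  have hv : ∀ s, LipschitzOnWith K (v s) univ := by
    intro s
    refine ((lipschitzWith_iff_dist_le_mul).2 ?_).lipschitzOnWith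
    intro x y
    have hb : ‖a (Set.projIcc t₀ t ht s)‖ ≤ C := hC _ (Set.projIcc t₀ t ht s).2
    calc dist (v s x) (v s y) = |a (Set.projIcc t₀ t ht s)| * dist x y := by
          simp only [hvdef, Real.dist_eq, ← mul_sub, abs_mul]
      _ ≤ K * dist x y := by
          apply mul_le_mul_of_nonneg_right _ dist_nonneg
          rw [Real.norm_eq_abs] at hb; exact hb
  have hvw : ∀ s ∈ Ico t₀ t, v s (w s) = a s * w s := by
    intro s hs
    simp [hvdef, Set.projIcc_of_mem ht ⟨hs.1, hs.2.le⟩]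
  have := ODE_solution_unique_of_mem_Icc_right (v := v)
    (s := fun _ => (univ : Set ℝ)) (fun s _ => hv s) hwc.continuousOn
    (fun s hs => (hvw s hs ▸ (hw s).hasDerivWithinAt)) (fun _ _ => mem_univ _)
    continuousOn_const
    (fun s _ => by simpa [hvdef] using (hasDerivWithinAt_const s (Ici s) (0:ℝ)))
    (fun _ _ => mem_univ _) h0
  exact this ⟨ht, le_refl t⟩

/-- If `w' = a·w` with `a` continuous and `w t₀ ≤ 0`, then `w t ≤ 0` for all `t ≥ t₀`. -/
private lemma nonpos_forward (a w : ℝ → ℝ) (ha : Continuous a)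
    (hw : ∀ t, HasDerivAt w (a t * w t) t) (hwc : Continuous w)
    {t₀ t : ℝ} (ht : t₀ ≤ t) (h0 : w t₀ ≤ 0) : w t ≤ 0 := by
  by_contra hgt
  push_neg at hgt
  have h0' : (0:ℝ) ∈ Icc (w t₀) (w t) := ⟨h0, hgt.le⟩
  obtain ⟨c, hc, hc0⟩ := intermediate_value_Icc ht hwc.continuousOn h0'
  have := zero_forward a w ha hw hwc hc.2 hc0
  linarith

/-- For the mutually incompatible two-strain model,
d/dt(q_{B,A}i_A - q_{A,B}i_B) = (τ - ηp)(q_{B,A}i_A - q_{A,B}i_B); hence the plane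
{q_{B,A}i_A = q_{A,B}i_B} and the wedges on either side are forward invariant. -/
theorem wedge_invariance_incompatible (τ η qAB qBA q0 : ℝ)
    (iA iB u : ℝ → ℝ)
    (hτ : 0 ≤ τ ∧ τ ≤ 1) (hη : 1 ≤ η)
    (hqAB : 0 ≤ qAB ∧ qAB ≤ 1) (hqBA : 0 ≤ qBA ∧ qBA ≤ 1)
    (hpos : ∀ t, 0 ≤ iA t ∧ 0 ≤ iB t ∧ 0 ≤ u t)
    (hp : ∀ t, 0 < iA t + iB t + u t)
    (hiA : ∀ t, HasDerivAt iA
      ((τ * (1 - qAB * iB t / (iA t + iB t + u t)) - η * (iA t + iB t + u t)) * iA t) t)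
    (hiB : ∀ t, HasDerivAt iB
      ((τ * (1 - qBA * iA t / (iA t + iB t + u t)) - η * (iA t + iB t + u t)) * iB t) t)
    (hu : ∀ t, HasDerivAt u
      ((1 - τ) * ((1 - qAB * iB t / (iA t + iB t + u t)) * iA t +
          (1 - qBA * iA t / (iA t + iB t + u t)) * iB t) +
        (1 - q0 * (iA t + iB t) / (iA t + iB t + u t)) * u t -
        (iA t + iB t + u t) * u t) t) :
    (∀ t, HasDerivAt (fun s => qBA * iA s - qAB * iB s)
        ((τ - η * (iA t + iB t + u t)) * (qBA * iA t - qAB * iB t)) t) ∧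
    (∀ t₀, qBA * iA t₀ = qAB * iB t₀ → ∀ t, t₀ ≤ t → qBA * iA t = qAB * iB t) ∧
    (∀ t₀, qBA * iA t₀ ≤ qAB * iB t₀ → ∀ t, t₀ ≤ t → qBA * iA t ≤ qAB * iB t) ∧
    (∀ t₀, qAB * iB t₀ ≤ qBA * iA t₀ → ∀ t, t₀ ≤ t → qAB * iB t ≤ qBA * iA t) := by
  have hiAc : Continuous iA := Differentiable.continuous (fun t => (hiA t).differentiableAt)
  have hiBc : Continuous iB := Differentiable.continuous (fun t => (hiB t).differentiableAt)
  have huc : Continuous u := Differentiable.continuous (fun t => (hu t).differentiableAt)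
  set w : ℝ → ℝ := fun s => qBA * iA s - qAB * iB s with hwdef
  set aa : ℝ → ℝ := fun s => τ - η * (iA s + iB s + u s) with haadef
  have haac : Continuous aa := by
    apply continuous_const.sub
    exact continuous_const.mul ((hiAc.add hiBc).add huc)
  have hwc : Continuous w := (continuous_const.mul hiAc).sub (continuous_const.mul hiBc)
  have key : ∀ t, HasDerivAt w (aa t * w t) t := by
    intro t
    have h : HasDerivAt (fun s => qBA * iA s - qAB * iB s) _ t := ((hiA t).const_mul qBA).sub ((hiB t).const_mul qAB)
    convert h using 1
    have hpt := (hp t).ne'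
    show (τ - η * (iA t + iB t + u t)) * (qBA * iA t - qAB * iB t) = _
    ring
  refine ⟨fun t => by simpa [haadef, hwdef] using key t, ?_, ?_, ?_⟩
  · intro t₀ h0 t ht
    have := zero_forward aa w haac key hwc ht (by simp [hwdef, h0])
    simpa [hwdef, sub_eq_zero] using this
  · intro t₀ h0 t ht
    have := nonpos_forward aa w haac key hwc ht (by simp [hwdef]; linarith)
    simp only [hwdef] at this; linarith
  · intro t₀ h0 t ht
    have key' : ∀ t, HasDerivAt (fun s => -(w s)) (aa t * (-(w t))) t := by
      intro t
      have h := (key t).neg; rw [← mul_neg] at h; exact h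
    have := nonpos_forward aa (fun s => -(w s)) haac key' hwc.neg ht
      (by simp [hwdef]; linarith)
    simp only [hwdef] at this; linarith
end

section
/- Let β₂ : [0,m] → ℝ_{≥0} and η₂ : [0,m] → ℝ_{>0} be continuous with β₂ not identically zero and η₂ > 0. Then the equation 1 = ∫₀^m β₂(a) exp(-U ∫₀^a η₂(r) dr) da has a (unique) positive solution U > 0 if and only if ∫₀^m β₂(a) da > 1. -/
open intervalIntegral

/-- The equation 1 = ∫₀^m β₂(a) exp(-U ∫₀^a η₂) da has a unique positive solution U
if and only if ∫₀^m β₂ > 1. -/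
theorem disease_free_steady_state_exists (m : ℝ) (β₂ η₂ : ℝ → ℝ)
    (hm : 0 < m)
    (hβc : ContinuousOn β₂ (Set.Icc 0 m))
    (hβnn : ∀ a ∈ Set.Icc 0 m, 0 ≤ β₂ a)
    (hβne : ∃ a ∈ Set.Icc 0 m, β₂ a ≠ 0)
    (hηc : ContinuousOn η₂ (Set.Icc 0 m))
    (hηpos : ∀ a ∈ Set.Icc 0 m, 0 < η₂ a) :
    (∃! U : ℝ, 0 < U ∧
        (1 : ℝ) = ∫ a in (0:ℝ)..m, β₂ a * Real.exp (-U * ∫ r in (0:ℝ)..a, η₂ r)) ↔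
      (1 : ℝ) < ∫ a in (0:ℝ)..m, β₂ a := by
  have hm' : (0:ℝ) ≤ m := hm.le
  -- extend β₂ and η₂ continuously to all of ℝ via projection onto [0,m]
  set π : ℝ → ℝ := fun x => max 0 (min x m) with hπdef
  have hπc : Continuous π := continuous_const.max (continuous_id.min continuous_const)
  have hπmem : ∀ x, π x ∈ Set.Icc 0 m := fun x =>
    ⟨le_max_left _ _, max_le hm' (min_le_right _ _)⟩
  have hπeq : ∀ a ∈ Set.Icc 0 m, π a = a := by
    intro a ha
    simp only [hπdef]
    rw [min_eq_left ha.2, max_eq_right ha.1]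
  set β : ℝ → ℝ := fun x => β₂ (π x) with hβdef
  set η : ℝ → ℝ := fun x => η₂ (π x) with hηdef
  have hβcont : Continuous β := hβc.comp_continuous hπc hπmem
  have hηcont : Continuous η := hηc.comp_continuous hπc hπmem
  have hβnn' : ∀ x, 0 ≤ β x := fun x => hβnn _ (hπmem x)
  have hηpos' : ∀ x, 0 < η x := fun x => hηpos _ (hπmem x)
  set H : ℝ → ℝ := fun a => ∫ r in (0:ℝ)..a, η r with hHdef
  have hHcont : Continuous H :=
    intervalIntegral.continuous_primitive (fun a b => hηcont.intervalIntegrable a b) 0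
  have hHpos : ∀ a : ℝ, 0 < a → 0 < H a := fun a ha =>
    intervalIntegral_pos_of_pos (hηcont.intervalIntegrable 0 a) hηpos' ha
  set G : ℝ → ℝ := fun U => ∫ a in (0:ℝ)..m, β a * Real.exp (-U * H a) with hGdef
  have hFcont : ∀ U : ℝ, Continuous fun a => β a * Real.exp (-U * H a) := fun U => by
    have : Continuous fun a => -U * H a := continuous_const.mul hHcont
    exact hβcont.mul (Real.continuous_exp.comp this)
  have hGcont : Continuous G := by
    apply intervalIntegral.continuous_parametric_intervalIntegral_of_continuous'
      (f := fun U a => β a * Real.exp (-U * H a))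
    have : Continuous fun p : ℝ × ℝ => -p.1 * H p.2 :=
      continuous_fst.neg.mul (hHcont.comp continuous_snd)
    exact (hβcont.comp continuous_snd).mul (Real.continuous_exp.comp this)
  -- the integrals in the statement coincide with G and G 0
  have hHeq : ∀ a ∈ Set.Icc 0 m, (∫ r in (0:ℝ)..a, η₂ r) = H a := by
    intro a ha
    apply intervalIntegral.integral_congr
    intro r hr
    rw [Set.uIcc_of_le ha.1] at hr
    have : π r = r := hπeq r ⟨hr.1, hr.2.trans ha.2⟩
    simp only [hηdef, this]
  have hrw : ∀ U : ℝ,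
      (∫ a in (0:ℝ)..m, β₂ a * Real.exp (-U * ∫ r in (0:ℝ)..a, η₂ r)) = G U := by
    intro U
    apply intervalIntegral.integral_congr
    intro a ha
    rw [Set.uIcc_of_le hm'] at ha
    have hπa : π a = a := hπeq a ha
    show β₂ a * Real.exp (-U * ∫ r in (0:ℝ)..a, η₂ r) = β a * Real.exp (-U * H a)
    rw [hHeq a ha]
    simp only [hβdef, hπa]
  have hG0 : G 0 = ∫ a in (0:ℝ)..m, β₂ a := by
    rw [hGdef]
    simp only [neg_zero, zero_mul, Real.exp_zero, mul_one]
    apply intervalIntegral.integral_congr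
    intro a ha
    rw [Set.uIcc_of_le hm'] at ha
    show β a = β₂ a
    simp only [hβdef, hπeq a ha]
  -- a point where β is positive and the argument is positive
  obtain ⟨a₀, ha₀m, ha₀pos, hβa₀⟩ : ∃ a₀ ∈ Set.Icc (0:ℝ) m, 0 < a₀ ∧ 0 < β a₀ := by
    obtain ⟨a, ha, hane⟩ := hβne
    have hβa : 0 < β a := by
      have : β a = β₂ a := by simp only [hβdef, hπeq a ha]
      rw [this]
      exact (hβnn a ha).lt_of_ne (Ne.symm hane)
    rcases lt_or_eq_of_le ha.1 with h0a | h0a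
    · exact ⟨a, ha, h0a, hβa⟩
    · -- a = 0 : use continuity to go slightly to the right
      have hβ0 : 0 < β 0 := by rwa [← h0a] at hβa
      have hev : ∀ᶠ x in nhds (0:ℝ), 0 < β x :=
        hβcont.continuousAt.eventually (eventually_gt_nhds hβ0)
      obtain ⟨ε, hε, hball⟩ := Metric.eventually_nhds_iff.mp hev
      refine ⟨min (ε/2) m, ⟨le_min (by linarith) hm', min_le_right _ _⟩,
        lt_min (by linarith) hm, hball ?_⟩
      have h1 : min (ε/2) m ≤ ε/2 := min_le_left _ _
      have h2 : 0 < min (ε/2) m := lt_min (by linarith) hm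
      rw [Real.dist_eq, sub_zero, abs_of_pos h2]
      linarith
  -- strict monotonicity of G on [0, ∞)
  have hanti : ∀ x y : ℝ, 0 ≤ x → x < y → G y < G x := by
    intro x y hx hxy
    apply intervalIntegral.integral_lt_integral_of_continuousOn_of_le_of_exists_lt hm
      (hFcont y).continuousOn (hFcont x).continuousOn
    · intro a ha
      have hH : 0 < H a := hHpos a ha.1
      apply mul_le_mul_of_nonneg_left _ (hβnn' a)
      exact Real.exp_le_exp.mpr (by nlinarith)
    · refine ⟨a₀, ha₀m, ?_⟩
      have hH : 0 < H a₀ := hHpos a₀ ha₀pos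
      apply mul_lt_mul_of_pos_left _ hβa₀
      exact Real.exp_lt_exp.mpr (by nlinarith)
  -- decay estimate : G U₀ < 1 for a suitable large U₀
  obtain ⟨xc, hxcm, hxcmin⟩ :=
    isCompact_Icc.exists_isMinOn (Set.nonempty_Icc.mpr hm') hηc
  set c : ℝ := η₂ xc with hcdef
  have hc : 0 < c := hηpos xc hxcm
  have hηlb : ∀ x, c ≤ η x := fun x => (isMinOn_iff.mp hxcmin) (π x) (hπmem x)
  obtain ⟨xB, hxBm, hxBmax⟩ :=
    isCompact_Icc.exists_isMaxOn (Set.nonempty_Icc.mpr hm') hβc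
  set B : ℝ := β₂ xB with hBdef
  have hB : 0 ≤ B := hβnn xB hxBm
  have hβub : ∀ x, β x ≤ B := fun x => (isMaxOn_iff.mp hxBmax) (π x) (hπmem x)
  have hHlb : ∀ a ∈ Set.Icc (0:ℝ) m, c * a ≤ H a := by
    intro a ha
    have h := intervalIntegral.integral_mono_on ha.1 (_root_.intervalIntegrable_const (μ := MeasureTheory.volume) (c := c))
      (hηcont.intervalIntegrable 0 a) (fun r _ => hηlb r)
    simpa [mul_comm] using h
  set U₀ : ℝ := (B + 1) / c with hU₀def
  have hU₀ : 0 < U₀ := div_pos (by linarith) hc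
  have hexp_int : ∀ k : ℝ, 0 < k →
      (∫ a in (0:ℝ)..m, Real.exp (-k * a)) = (1 - Real.exp (-k * m)) / k := by
    intro k hk
    have hd : ∀ a ∈ Set.uIcc (0:ℝ) m,
        HasDerivAt (fun a => -(Real.exp (-k * a) / k)) (Real.exp (-k * a)) a := by
      intro a _
      have h1 : HasDerivAt (fun a : ℝ => -k * a) (-k) a := by
        simpa using (hasDerivAt_id a).const_mul (-k)
      have h3 := ((h1.exp).div_const k).neg
      have heq : -(Real.exp (-k * a) * -k / k) = Real.exp (-k * a) := by
        field_simp
      rw [heq] at h3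
      exact h3
    have hint : IntervalIntegrable (fun a => Real.exp (-k * a)) MeasureTheory.volume 0 m :=
      (Real.continuous_exp.comp (continuous_const.mul continuous_id)).intervalIntegrable 0 m
    rw [intervalIntegral.integral_eq_sub_of_hasDerivAt hd hint]
    have h0 : -k * (0:ℝ) = 0 := by ring
    rw [h0, Real.exp_zero]
    field_simp
    ring
  have hGU₀ : G U₀ < 1 := by
    have hbound : G U₀ ≤ ∫ a in (0:ℝ)..m, B * Real.exp (-(U₀ * c) * a) := by
      apply intervalIntegral.integral_mono_on hm' ((hFcont U₀).intervalIntegrable 0 m)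
        ((continuous_const.mul (Real.continuous_exp.comp
          (continuous_const.mul continuous_id))).intervalIntegrable 0 m)
      intro a ha
      have h1 : -U₀ * H a ≤ -(U₀ * c) * a := by
        have := hHlb a ha
        nlinarith [hU₀]
      exact mul_le_mul (hβub a) (Real.exp_le_exp.mpr h1) (Real.exp_pos _).le hB
    have hUc : 0 < U₀ * c := mul_pos hU₀ hc
    have hcomp : (∫ a in (0:ℝ)..m, B * Real.exp (-(U₀ * c) * a)) =
        B * ((1 - Real.exp (-(U₀ * c) * m)) / (U₀ * c)) := by
      rw [intervalIntegral.integral_const_mul, hexp_int _ hUc]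
    have hexpnn : 0 < Real.exp (-(U₀ * c) * m) := Real.exp_pos _
    have hUcB : U₀ * c = B + 1 := by
      rw [hU₀def]
      field_simp
    have : B * ((1 - Real.exp (-(U₀ * c) * m)) / (U₀ * c)) < 1 := by
      rw [hUcB, ← mul_div_assoc, div_lt_one (by linarith : (0:ℝ) < B + 1)]
      nlinarith [Real.exp_pos (-(B + 1) * m), hB]
    calc G U₀ ≤ _ := hbound
      _ = _ := hcomp
      _ < 1 := this
  -- main equivalence
  rw [← hG0]
  constructor
  · rintro ⟨U, ⟨hU, hGU⟩, -⟩
    rw [hrw U] at hGU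
    have := hanti 0 U le_rfl hU
    linarith
  · intro h1
    obtain ⟨U, hUmem, hGU⟩ :=
      intermediate_value_Icc' hU₀.le hGcont.continuousOn ⟨hGU₀.le, h1.le⟩
    have hUpos : 0 < U := by
      rcases eq_or_lt_of_le hUmem.1 with h | h
      · exfalso; rw [← h] at hGU; linarith
      · exact h
    refine ⟨U, ⟨hUpos, by rw [hrw U, hGU]⟩, ?_⟩
    rintro V ⟨hV, hGV⟩
    rw [hrw V] at hGV
    by_contra hne
    rcases lt_or_gt_of_ne hne with h | h
    · have := hanti V U hV.le h
      linarith
    · have := hanti U V hUpos.le h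
      linarith
end

section
/- Let β₁ : [0,m] → ℝ_{≥0} and η₁ : [0,m] → ℝ_{>0} be continuous, β₁ not identically zero, and τ ∈ (0,1]. If the equation 1 = τ ∫₀^m β₁(a) exp(-c ∫₀^a η₁(r) dr) da has a solution c ≥ 0, then ∫₀^m β₁(a) da > 1/τ (unless c = 0, in which case equality ∫₀^m β₁ = 1/τ holds). Conversely, if ∫₀^m β₁(a) da > 1/τ then there is a unique c > 0 solving the equation. -/
open intervalIntegral

/-- The equilibrium condition 1 = τ∫₀^m β₁(a)exp(-c∫₀^a η₁) da: a nonnegative solution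
c forces ∫₀^m β₁ > 1/τ (with equality when c = 0); conversely ∫₀^m β₁ > 1/τ yields a
unique positive solution c. -/
theorem positive_equilibrium_condition (m τ : ℝ) (β₁ η₁ : ℝ → ℝ)
    (hm : 0 < m) (hτ : 0 < τ ∧ τ ≤ 1)
    (hβc : ContinuousOn β₁ (Set.Icc 0 m))
    (hβnn : ∀ a ∈ Set.Icc 0 m, 0 ≤ β₁ a)
    (hβne : ∃ a ∈ Set.Icc 0 m, β₁ a ≠ 0)
    (hηc : ContinuousOn η₁ (Set.Icc 0 m))
    (hηpos : ∀ a ∈ Set.Icc 0 m, 0 < η₁ a) :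
    (∀ c : ℝ, 0 ≤ c →
      (1 : ℝ) = τ * ∫ a in (0:ℝ)..m, β₁ a * Real.exp (-c * ∫ r in (0:ℝ)..a, η₁ r) →
      (0 < c → (∫ a in (0:ℝ)..m, β₁ a) > 1 / τ) ∧
      (c = 0 → (∫ a in (0:ℝ)..m, β₁ a) = 1 / τ)) ∧
    ((∫ a in (0:ℝ)..m, β₁ a) > 1 / τ →
      ∃! c : ℝ, 0 < c ∧
        (1 : ℝ) = τ * ∫ a in (0:ℝ)..m, β₁ a * Real.exp (-c * ∫ r in (0:ℝ)..a, η₁ r)) := by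
  obtain ⟨hτ0, hτ1⟩ := hτ
  set B : ℝ → ℝ := Set.IccExtend hm.le ((Set.Icc (0:ℝ) m).restrict β₁) with hBdef
  set H : ℝ → ℝ := Set.IccExtend hm.le ((Set.Icc (0:ℝ) m).restrict η₁) with hHdef
  have hB : Continuous B :=
    Continuous.Icc_extend' (continuousOn_iff_continuous_restrict.mp hβc)
  have hH : Continuous H :=
    Continuous.Icc_extend' (continuousOn_iff_continuous_restrict.mp hηc)
  have hBeq : ∀ a ∈ Set.Icc (0:ℝ) m, B a = β₁ a := fun a ha =>
    Set.IccExtend_of_mem hm.le _ ha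
  have hHeq : ∀ a ∈ Set.Icc (0:ℝ) m, H a = η₁ a := fun a ha =>
    Set.IccExtend_of_mem hm.le _ ha
  have hBnn : ∀ a, 0 ≤ B a := fun a =>
    hβnn _ (Set.projIcc 0 m hm.le a).2
  have hHpos : ∀ a, 0 < H a := fun a =>
    hηpos _ (Set.projIcc 0 m hm.le a).2
  set E : ℝ → ℝ := fun a => ∫ r in (0:ℝ)..a, H r with hEdef
  have hHint : ∀ a b : ℝ, IntervalIntegrable H MeasureTheory.volume a b :=
    fun a b => hH.intervalIntegrable a b
  have hE : Continuous E := intervalIntegral.continuous_primitive hHint 0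
  have hEnn : ∀ a, 0 ≤ a → 0 ≤ E a := fun a ha =>
    intervalIntegral.integral_nonneg ha (fun x _ => (hHpos x).le)
  have hEpos : ∀ a, 0 < a → 0 < E a := fun a ha =>
    intervalIntegral_pos_of_pos (hHint 0 a) hHpos ha
  -- the parametric integral
  set G : ℝ → ℝ := fun c => ∫ a in (0:ℝ)..m, B a * Real.exp (-c * E a) with hGdef
  have hGcont : Continuous G := by
    apply intervalIntegral.continuous_parametric_intervalIntegral_of_continuous'
      (f := fun (c : ℝ) (a : ℝ) => B a * Real.exp (-c * E a))
    apply Continuous.mul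
    · exact hB.comp continuous_snd
    · exact Real.continuous_exp.comp (continuous_fst.neg.mul (hE.comp continuous_snd))
  have hkey : ∀ c : ℝ,
      (∫ a in (0:ℝ)..m, β₁ a * Real.exp (-c * ∫ r in (0:ℝ)..a, η₁ r)) = G c := by
    intro c
    apply intervalIntegral.integral_congr
    intro a ha
    rw [Set.uIcc_of_le hm.le] at ha
    have h2 : (∫ r in (0:ℝ)..a, η₁ r) = E a := by
      apply intervalIntegral.integral_congr
      intro r hr
      rw [Set.uIcc_of_le ha.1] at hr
      exact (hHeq r ⟨hr.1, hr.2.trans ha.2⟩).symm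
    show β₁ a * Real.exp (-c * ∫ r in (0:ℝ)..a, η₁ r) = B a * Real.exp (-c * E a)
    rw [hBeq a ha, h2]
  have hG0 : G 0 = ∫ a in (0:ℝ)..m, β₁ a := by
    rw [hGdef]
    simp only [neg_zero, zero_mul, Real.exp_zero, mul_one]
    exact intervalIntegral.integral_congr fun a ha =>
      hBeq a (by rwa [Set.uIcc_of_le hm.le] at ha)
  -- strict antitonicity
  have hGanti : ∀ c c' : ℝ, c < c' → G c' < G c := by
    intro c c' hcc
    obtain ⟨a0, ha0m, ha0⟩ := hβne
    have hBa0 : 0 < B a0 := by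
      rw [hBeq a0 ha0m]; exact lt_of_le_of_ne (hβnn a0 ha0m) (Ne.symm ha0)
    have hev : ∀ᶠ x in nhds a0, 0 < B x :=
      hB.continuousAt.eventually (lt_mem_nhds hBa0)
    obtain ⟨δ, hδ0, hδ⟩ := Metric.eventually_nhds_iff.mp hev
    set p : ℝ := max 0 (a0 - δ/2) with hpdef
    set q : ℝ := min m (a0 + δ/2) with hqdef
    have hp0 : 0 ≤ p := le_max_left _ _
    have hqm : q ≤ m := min_le_left _ _
    have hpq : p < q := by
      apply max_lt <;> apply lt_min
      · exact hm
      · linarith [ha0m.1]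
      · linarith [ha0m.2]
      · linarith
    have hBpos : ∀ x ∈ Set.Ioo p q, 0 < B x := by
      intro x hx
      apply hδ
      rw [Real.dist_eq, abs_sub_lt_iff]
      have h1 : a0 - δ/2 ≤ p := le_max_right _ _
      have h2 : q ≤ a0 + δ/2 := min_le_right _ _
      constructor
      · linarith [hx.1, hx.2]
      · linarith [hx.1, hx.2]
    set d : ℝ → ℝ := fun a => B a * Real.exp (-c * E a) - B a * Real.exp (-c' * E a)
      with hddef
    have hdcont : Continuous d := by
      apply Continuous.sub <;>
      · apply hB.mul
        exact Real.continuous_exp.comp (continuous_const.mul hE)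
    have hdint : ∀ a b : ℝ, IntervalIntegrable d MeasureTheory.volume a b :=
      fun a b => hdcont.intervalIntegrable a b
    have hdnn : ∀ a, 0 ≤ a → 0 ≤ d a := by
      intro a ha
      apply sub_nonneg.mpr
      apply mul_le_mul_of_nonneg_left _ (hBnn a)
      apply Real.exp_le_exp.mpr
      nlinarith [hEnn a ha]
    have hmid : 0 < ∫ x in p..q, d x := by
      apply intervalIntegral_pos_of_pos_on (hdint p q) _ hpq
      intro x hx
      have hx0 : 0 < x := lt_of_le_of_lt hp0 hx.1
      have hEx : 0 < E x := hEpos x hx0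
      apply sub_pos.mpr
      apply mul_lt_mul_of_pos_left _ (hBpos x hx)
      apply Real.exp_lt_exp.mpr
      nlinarith
    have h1 : 0 ≤ ∫ x in (0:ℝ)..p, d x :=
      intervalIntegral.integral_nonneg hp0 (fun x hx => hdnn x hx.1)
    have h3 : 0 ≤ ∫ x in q..m, d x :=
      intervalIntegral.integral_nonneg hqm
        (fun x hx => hdnn x (le_trans (le_trans hp0 hpq.le) hx.1))
    have hsplit : (∫ x in (0:ℝ)..m, d x)
        = (∫ x in (0:ℝ)..p, d x) + (∫ x in p..q, d x) + (∫ x in q..m, d x) := by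
      rw [intervalIntegral.integral_add_adjacent_intervals (hdint 0 p) (hdint p q),
        intervalIntegral.integral_add_adjacent_intervals
          ((hdint 0 p).trans (hdint p q)) (hdint q m)]
    have hdiff : G c - G c' = ∫ x in (0:ℝ)..m, d x := by
      rw [hGdef]
      simp only
      rw [← intervalIntegral.integral_sub]
      · exact (hB.mul (Real.continuous_exp.comp (continuous_const.mul hE))).intervalIntegrable 0 m
      · exact (hB.mul (Real.continuous_exp.comp (continuous_const.mul hE))).intervalIntegrable 0 m
    have : 0 < G c - G c' := by rw [hdiff, hsplit]; linarith
    linarith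
  constructor
  · -- first part
    intro c hc heq
    rw [hkey c] at heq
    constructor
    · intro hcpos
      have h1 : G c < G 0 := hGanti 0 c hcpos
      have h2 : τ * G c = 1 := heq.symm
      rw [hG0] at h1
      rw [gt_iff_lt, div_lt_iff₀ hτ0]
      nlinarith
    · intro hc0
      subst hc0
      rw [hG0] at heq
      field_simp
      linarith
  · -- second part
    intro hgt
    have hG0gt : 1/τ < G 0 := by rw [hG0]; exact hgt
    -- bound B on [0,m]
    obtain ⟨x0, _, hx0⟩ := isCompact_Icc.exists_isMaxOn (Set.nonempty_Icc.mpr hm.le)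
      (hB.continuousOn (s := Set.Icc 0 m))
    set M : ℝ := B x0 + 1 with hMdef
    have hM0 : 0 < M := by have := hBnn x0; linarith
    have hMb : ∀ a ∈ Set.Icc (0:ℝ) m, B a ≤ M := fun a ha => by
      have : B a ≤ B x0 := hx0 ha; linarith
    set δ : ℝ := min m (1 / (2 * M)) with hδdef
    have hδ0 : 0 < δ := lt_min hm (by positivity)
    have hδm : δ ≤ m := min_le_left _ _
    have hδM : M * δ ≤ 1/2 := by
      have h1 : δ ≤ 1 / (2*M) := min_le_right _ _
      rw [le_div_iff₀ (by positivity)] at h1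
      nlinarith
    set e : ℝ := E δ with hedef
    have he0 : 0 < e := hEpos δ hδ0
    -- find C with G C < 1/τ
    have htend : Filter.Tendsto (fun c : ℝ => M * (m - δ) * Real.exp (-c * e))
        Filter.atTop (nhds 0) := by
      rw [show (0:ℝ) = M * (m - δ) * 0 by ring]
      apply Filter.Tendsto.const_mul
      have h1 : Filter.Tendsto (fun c : ℝ => c * e) Filter.atTop Filter.atTop :=
        Filter.Tendsto.atTop_mul_const he0 Filter.tendsto_id
      have h2 : Filter.Tendsto (fun c : ℝ => -(c * e)) Filter.atTop Filter.atBot :=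
        Filter.tendsto_neg_atTop_atBot.comp h1
      exact (Real.tendsto_exp_atBot.comp h2).congr (fun x => by rw [Function.comp]; ring_nf)
    have hev : ∀ᶠ c in Filter.atTop, M * (m - δ) * Real.exp (-c * e) < 1/2 :=
      htend.eventually (gt_mem_nhds (by norm_num : (0:ℝ) < 1/2))
    obtain ⟨C, hC, hC1⟩ := (hev.and (Filter.eventually_ge_atTop (1:ℝ))).exists
    have hfint : ∀ (c : ℝ) (a b : ℝ),
        IntervalIntegrable (fun a => B a * Real.exp (-c * E a)) MeasureTheory.volume a b :=
      fun c a b => (hB.mul (Real.continuous_exp.comp (continuous_const.mul hE))).intervalIntegrable a b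
    have hEmono : ∀ a b : ℝ, a ≤ b → E a ≤ E b := by
      intro a b hab
      have : E b - E a = ∫ r in a..b, H r :=
        intervalIntegral.integral_interval_sub_left (hHint 0 b) (hHint 0 a)
      have h2 : 0 ≤ ∫ r in a..b, H r :=
        intervalIntegral.integral_nonneg hab (fun x _ => (hHpos x).le)
      linarith
    have hGC : G C < 1/τ := by
      have hsplit : G C = (∫ a in (0:ℝ)..δ, B a * Real.exp (-C * E a))
          + ∫ a in δ..m, B a * Real.exp (-C * E a) := by
        rw [hGdef]; simp only
        rw [intervalIntegral.integral_add_adjacent_intervals (hfint C 0 δ) (hfint C δ m)]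
      have hpiece1 : (∫ a in (0:ℝ)..δ, B a * Real.exp (-C * E a)) ≤ M * δ := by
        have h1 : (∫ a in (0:ℝ)..δ, B a * Real.exp (-C * E a)) ≤ ∫ _ in (0:ℝ)..δ, M := by
          apply intervalIntegral.integral_mono_on hδ0.le (hfint C 0 δ)
            (intervalIntegrable_const)
          intro x hx
          have hBx : B x ≤ M := hMb x ⟨hx.1, hx.2.trans hδm⟩
          have hex : Real.exp (-C * E x) ≤ 1 := by
            apply Real.exp_le_one_iff.mpr
            have := hEnn x hx.1
            nlinarith
          have := hBnn x
          nlinarith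
        rw [intervalIntegral.integral_const, smul_eq_mul] at h1
        linarith
      have hpiece2 : (∫ a in δ..m, B a * Real.exp (-C * E a))
          ≤ M * (m - δ) * Real.exp (-C * e) := by
        have h1 : (∫ a in δ..m, B a * Real.exp (-C * E a))
            ≤ ∫ _ in δ..m, M * Real.exp (-C * e) := by
          apply intervalIntegral.integral_mono_on hδm (hfint C δ m)
            (intervalIntegrable_const)
          intro x hx
          have hBx : B x ≤ M := hMb x ⟨hδ0.le.trans hx.1, hx.2⟩
          have hEx : e ≤ E x := hEmono δ x hx.1
          have hex : Real.exp (-C * E x) ≤ Real.exp (-C * e) := by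
            apply Real.exp_le_exp.mpr
            nlinarith
          have := hBnn x
          have := Real.exp_pos (-C * E x)
          nlinarith
        rw [intervalIntegral.integral_const, smul_eq_mul] at h1
        linarith
      have hτinv : 1 ≤ 1/τ := by
        rw [le_div_iff₀ hτ0]; linarith
      have := hC
      calc G C ≤ M * δ + M * (m - δ) * Real.exp (-C * e) := by
            rw [hsplit]; linarith
        _ < 1/2 + 1/2 := by linarith
        _ ≤ 1/τ := by linarith
    -- intermediate value theorem
    have hC0 : (0:ℝ) ≤ C := by linarith
    have hiv := intermediate_value_Icc' hC0 (hGcont.continuousOn (s := Set.Icc 0 C))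
    have hmem : (1/τ) ∈ Set.Icc (G C) (G 0) := ⟨hGC.le, hG0gt.le⟩
    obtain ⟨c, hcmem, hcval⟩ := hiv hmem
    have hcpos : 0 < c := by
      rcases lt_or_eq_of_le hcmem.1 with h | h
      · exact h
      · exfalso; rw [← h] at hcval; rw [hcval] at hG0gt; exact lt_irrefl _ hG0gt
    refine ⟨c, ⟨hcpos, ?_⟩, ?_⟩
    · rw [hkey c, hcval]
      field_simp
    · rintro c' ⟨hc'pos, hc'eq⟩
      rw [hkey c'] at hc'eq
      have hGc' : G c' = 1/τ := by
        field_simp at hc'eq ⊢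
        linarith
      have hGc : G c = 1/τ := hcval
      rcases lt_trichotomy c' c with h | h | h
      · have := hGanti c' c h; rw [hGc, hGc'] at this; linarith
      · exact h
      · have := hGanti c c' h; rw [hGc, hGc'] at this; linarith
end
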